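/- Consider the chemostat system under the quantized feedback: u = D_i when ξ ∈ Y_i, with regions Y_i = {ξ : ȳ_i ≤ y(ξ) ≤ ō_i}. If Conditions y_b(D_i) < ȳ_i and y_a(D_i) > ō_i hold for index i < n, then along any (Filippov) solution starting in Y_i, the function V(ξ) = y_a(D_n) − y(ξ) is strictly decreasing as long as the solution stays in Y_i; consequently every such solution leaves Y_i in finite time through the boundary y(ξ) = ō_i. -/

import Mathlib

/-!
Along the dynamics the output `y = α μ(s) x` satisfies `ẏ = α x (μ'(s) ṡ + μ(s) (μ(s) - D))`.
Inside `Y_i` the two conditions squeeze `ṡ = D (s_in - s) - (k/α) y` strictly between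
`D (s_a - s)` and `D (s_b - s)`, and at `ṡ = D (r - s)` with `μ(r) = D` the bracket equals
`D μ̄ K_S (r - s)² / (r q(s)²) ≥ 0`, where `q` is the denominator of `μ`. Taking `r = s_a` or
`r = s_b` according to the sign of `μ'(s)` gives `ẏ > 0`, so `V` decreases and the solution
cannot leave through `y = ȳ_i`. If it never reached `y = ō_i` it would stay in `Y_i` forever;
then `s` stays in `[min (s 0) s_a, max (s 0) s_in]` (`ṡ > 0` below `s_a`, `ṡ < 0` above `s_in`)
and `y` in `[y 0, ō_i]`. On this compact set `ẏ`, a continuous positive function of `(s, y)`,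
is bounded below by some `ε > 0`, so `y` would eventually exceed `ō_i`.
-/
open Set Filter Topology

theorem HasDerivAt.eventually_lt_right {f : ℝ → ℝ} {f' x : ℝ} (hf : HasDerivAt f f' x)
    (hf' : 0 < f') : ∀ᶠ y in 𝓝[>] x, f x < f y := by
  filter_upwards [(hf.tendsto_slope.mono_left (nhdsGT_le_nhdsNE x)).eventually
    (eventually_gt_nhds hf'), self_mem_nhdsWithin] with y hslope hy
  exact (slope_pos_iff hy).1 hslope

theorem ge_of_hasDerivAt_pos_of_eq {f f' : ℝ → ℝ} {a b c : ℝ} (hf : ContinuousOn f (Icc a b))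
    (ha : c ≤ f a) (hc : ∀ t ∈ Ico a b, f t = c → HasDerivAt f (f' t) t ∧ 0 < f' t) :
    ∀ t ∈ Icc a b, c ≤ f t := by
  have hclosed : IsClosed ({t | c ≤ f t} ∩ Icc a b) := by
    rw [inter_comm]
    exact hf.preimage_isClosed_of_isClosed isClosed_Icc isClosed_Ici
  refine hclosed.Icc_subset_of_forall_exists_gt ha fun t ⟨hct, hat, htb⟩ u hu => ?_
  have hnear : ∀ᶠ v in 𝓝[>] t, c ≤ f v := by
    rcases (show c ≤ f t from hct).eq_or_lt with heq | hlt
    · obtain ⟨hderiv, hpos⟩ := hc t ⟨hat, htb⟩ heq.symm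
      filter_upwards [hderiv.eventually_lt_right hpos] with v hv
      exact heq.le.trans hv.le
    · have hcont : ContinuousWithinAt f (Ioo t b) t :=
        (hf.continuousWithinAt ⟨hat, htb.le⟩).mono fun v hv => ⟨hat.trans hv.1.le, hv.2.le⟩
      rw [ContinuousWithinAt, nhdsWithin_Ioo_eq_nhdsGT htb] at hcont
      exact (hcont.eventually (eventually_gt_nhds hlt)).mono fun v hv => hv.le
  exact (hnear.and (Ioc_mem_nhdsGT hu)).exists

theorem exists_first_eq {f : ℝ → ℝ} {a b c : ℝ} (hf : ContinuousOn f (Icc a b)) (hab : a ≤ b)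
    (ha : f a ≤ c) (hb : c ≤ f b) : ∃ T ∈ Icc a b, f T = c ∧ ∀ t ∈ Ico a T, f t < c := by
  set S := {t ∈ Icc a b | c ≤ f t}
  have hbdd : BddBelow S := bddBelow_Icc.mono fun t ht => ht.1
  obtain ⟨⟨haT, hTb⟩, hcT⟩ : sInf S ∈ S :=
    (hf.preimage_isClosed_of_isClosed isClosed_Icc isClosed_Ici).csInf_mem
      ⟨b, right_mem_Icc.2 hab, hb⟩ hbdd
  have hbefore : ∀ t ∈ Ico a (sInf S), f t < c := fun t ht => not_le.1 fun hct =>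
    ht.2.not_ge (csInf_le hbdd ⟨⟨ht.1, ht.2.le.trans hTb⟩, hct⟩)
  refine ⟨sInf S, ⟨haT, hTb⟩, le_antisymm ?_ hcT, hbefore⟩
  by_contra! hlt
  obtain ⟨t, ht, hft⟩ :=
    intermediate_value_Icc haT (hf.mono (Icc_subset_Icc_right hTb)) ⟨ha, hlt.le⟩
  have hTt : sInf S ≤ t := csInf_le hbdd ⟨⟨ht.1, ht.2.trans hTb⟩, hft.ge⟩
  rw [le_antisymm ht.2 hTt] at hft
  exact hlt.ne' hft

theorem exists_ge_of_forall_le_deriv {f f' : ℝ → ℝ} {ε : ℝ}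
    (hf : ∀ t ≥ 0, HasDerivAt f (f' t) t) (hε : 0 < ε) (hf' : ∀ t ≥ 0, ε ≤ f' t) (c : ℝ) :
    ∃ t ≥ 0, c ≤ f t := by
  have hgrowth := (convex_Ici (0 : ℝ)).mul_sub_le_image_sub_of_le_deriv
    (fun t ht => (hf t ht).continuousAt.continuousWithinAt)
    (fun t ht => (hf t (interior_subset ht)).differentiableAt.differentiableWithinAt)
    (fun t ht => (hf t (interior_subset ht)).deriv ▸ hf' t (interior_subset ht))
  have hpos : 0 ≤ |c - f 0| / ε := by positivity
  refine ⟨|c - f 0| / ε, hpos, ?_⟩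
  have h := hgrowth 0 self_mem_Ici _ hpos hpos
  rw [sub_zero, mul_div_cancel₀ _ hε.ne'] at h
  linarith [le_abs_self (c - f 0)]

section Region

variable {Y Y' : ℝ → ℝ} {lo hi : ℝ}

theorem strictMonoOn_of_mapsTo_Icc (hderiv : ∀ t ≥ 0, Y t ∈ Icc lo hi → HasDerivAt Y (Y' t) t)
    (hpos : ∀ t ≥ 0, Y t ∈ Icc lo hi → 0 < Y' t) {t₁ t₂ : ℝ} (ht₁ : 0 ≤ t₁)
    (hreg : MapsTo Y (Icc t₁ t₂) (Icc lo hi)) : StrictMonoOn Y (Icc t₁ t₂) := by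
  have hderiv' : ∀ t ∈ Icc t₁ t₂, HasDerivAt Y (Y' t) t := fun t ht =>
    hderiv t (ht₁.trans ht.1) (hreg ht)
  exact strictMonoOn_of_hasDerivWithinAt_pos (convex_Icc t₁ t₂)
    (fun t ht => (hderiv' t ht).continuousAt.continuousWithinAt)
    (fun t ht => (hderiv' t (interior_subset ht)).hasDerivWithinAt)
    fun t ht => hpos t (ht₁.trans (interior_subset ht).1) (hreg (interior_subset ht))

theorem lo_le_of_forall_le_hi (hY : ContinuousOn Y (Ici 0)) (h₀ : lo ≤ Y 0)
    (hderiv : ∀ t ≥ 0, Y t ∈ Icc lo hi → HasDerivAt Y (Y' t) t)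
    (hpos : ∀ t ≥ 0, Y t ∈ Icc lo hi → 0 < Y' t) {t : ℝ} (ht : 0 ≤ t)
    (hhi : ∀ τ ∈ Icc 0 t, Y τ ≤ hi) : lo ≤ Y t := by
  refine ge_of_hasDerivAt_pos_of_eq (f' := Y') (hY.mono Icc_subset_Ici_self) h₀
    (fun τ hτ hτlo => ?_) t ⟨ht, le_rfl⟩
  have hreg : Y τ ∈ Icc lo hi := ⟨hτlo.ge, hhi τ (Ico_subset_Icc_self hτ)⟩
  exact ⟨hderiv τ hτ.1 hreg, hpos τ hτ.1 hreg⟩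

theorem exists_exit (hY : ContinuousOn Y (Ici 0)) (h₀ : Y 0 ∈ Icc lo hi)
    (hderiv : ∀ t ≥ 0, Y t ∈ Icc lo hi → HasDerivAt Y (Y' t) t)
    (hpos : ∀ t ≥ 0, Y t ∈ Icc lo hi → 0 < Y' t)
    (hspeed : (∀ t ≥ 0, Y t ∈ Icc (Y 0) hi) → ∃ ε > 0, ∀ t ≥ 0, ε ≤ Y' t) :
    ∃ T, 0 ≤ T ∧ Y T = hi ∧ ∀ t ∈ Ico 0 T, lo ≤ Y t ∧ Y t < hi := by
  obtain ⟨t₁, ht₁, hhi⟩ : ∃ t ≥ 0, hi ≤ Y t := by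
    by_contra! hbelow
    have hreg : ∀ t ≥ 0, Y t ∈ Icc lo hi := fun t ht =>
      ⟨lo_le_of_forall_le_hi hY h₀.1 hderiv hpos ht fun τ hτ => (hbelow τ hτ.1).le,
        (hbelow t ht).le⟩
    have hmono : ∀ t ≥ 0, Y 0 ≤ Y t := fun t ht =>
      (strictMonoOn_of_mapsTo_Icc hderiv hpos le_rfl fun τ hτ => hreg τ hτ.1).monotoneOn
        ⟨le_rfl, ht⟩ ⟨ht, le_rfl⟩ ht
    obtain ⟨ε, hε, hεle⟩ := hspeed fun t ht => ⟨hmono t ht, (hreg t ht).2⟩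
    obtain ⟨t, ht, hge⟩ :=
      exists_ge_of_forall_le_deriv (fun t ht => hderiv t ht (hreg t ht)) hε hεle hi
    exact (hbelow t ht).not_ge hge
  obtain ⟨T, hT, hYT, hbefore⟩ := exists_first_eq (hY.mono Icc_subset_Ici_self) ht₁ h₀.2 hhi
  refine ⟨T, hT.1, hYT, fun t ht => ⟨?_, hbefore t ht⟩⟩
  exact lo_le_of_forall_le_hi hY h₀.1 hderiv hpos ht.1 fun τ hτ =>
    (hbefore τ ⟨hτ.1, hτ.2.trans_lt ht.2⟩).le

end Region

section Haldane

variable {μbar kS kI : ℝ}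

noncomputable def haldane (μbar kS kI s : ℝ) : ℝ := μbar * s / (kS + s + s ^ 2 / kI)

noncomputable def haldaneDeriv (μbar kS kI s : ℝ) : ℝ :=
  μbar * (kS - s ^ 2 / kI) / (kS + s + s ^ 2 / kI) ^ 2

lemma haldane_denom_pos (hkS : 0 < kS) (hkI : 0 < kI) {s : ℝ} (hs : 0 ≤ s) :
    0 < kS + s + s ^ 2 / kI := by
  positivity

lemma haldane_pos (hμbar : 0 < μbar) (hkS : 0 < kS) (hkI : 0 < kI) {s : ℝ} (hs : 0 < s) :
    0 < haldane μbar kS kI s :=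
  div_pos (mul_pos hμbar hs) (haldane_denom_pos hkS hkI hs.le)

lemma hasDerivAt_haldane (hkS : 0 < kS) (hkI : 0 < kI) {s : ℝ} (hs : 0 ≤ s) :
    HasDerivAt (haldane μbar kS kI) (haldaneDeriv μbar kS kI s) s := by
  have hq := haldane_denom_pos hkS hkI hs
  have h := ((hasDerivAt_id' s).const_mul μbar).div
    (((hasDerivAt_id' s).const_add kS).add ((hasDerivAt_pow 2 s).div_const kI)) hq.ne'
  refine h.congr_deriv ?_
  simp only [haldaneDeriv, Pi.add_apply]
  field_simp
  ring

lemma continuousOn_haldane (hkS : 0 < kS) (hkI : 0 < kI) :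
    ContinuousOn (haldane μbar kS kI) (Ici 0) := fun _ hs =>
  (hasDerivAt_haldane hkS hkI hs).continuousAt.continuousWithinAt

lemma continuousOn_haldaneDeriv (hkS : 0 < kS) (hkI : 0 < kI) :
    ContinuousOn (haldaneDeriv μbar kS kI) (Ici 0) := by
  unfold haldaneDeriv
  exact ContinuousOn.div (by fun_prop) (by fun_prop) fun s hs =>
    pow_ne_zero 2 (haldane_denom_pos hkS hkI hs).ne'

lemma haldaneDeriv_mul_add_eq (hkS : 0 < kS) (hkI : 0 < kI) {D r s : ℝ} (hr : 0 < r)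
    (hs : 0 ≤ s) (hroot : haldane μbar kS kI r = D) :
    haldaneDeriv μbar kS kI s * (D * (r - s)) + haldane μbar kS kI s * (haldane μbar kS kI s - D)
      = D * μbar * kS * (r - s) ^ 2 / (r * (kS + s + s ^ 2 / kI) ^ 2) := by
  have hq := haldane_denom_pos hkS hkI hs
  have hqr := haldane_denom_pos hkS hkI hr.le
  subst hroot
  unfold haldane haldaneDeriv
  field_simp
  ring

lemma eq_sqrt_of_haldaneDeriv_eq_zero (hμbar : 0 < μbar) (hkS : 0 < kS) (hkI : 0 < kI) {s : ℝ}
    (hs : 0 ≤ s) (h : haldaneDeriv μbar kS kI s = 0) : s = Real.sqrt (kS * kI) := by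
  have hq := haldane_denom_pos hkS hkI hs
  unfold haldaneDeriv at h
  field_simp at h
  have h2 : s ^ 2 = kS * kI := by
    have : kS * kI - s ^ 2 = 0 := by simpa [hμbar.ne', hkI.ne'] using h
    linarith
  rw [← h2, Real.sqrt_sq hs]

lemma haldaneDeriv_mul_add_pos (hμbar : 0 < μbar) (hkS : 0 < kS) (hkI : 0 < kI)
    {D sa sb s σ : ℝ} (hsa : 0 < sa) (hsb : 0 < sb) (hra : haldane μbar kS kI sa = D)
    (hrb : haldane μbar kS kI sb = D) (hpeak : D < haldane μbar kS kI (Real.sqrt (kS * kI)))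
    (hs : 0 < s) (hσa : D * (sa - s) < σ) (hσb : σ < D * (sb - s)) :
    0 < haldaneDeriv μbar kS kI s * σ + haldane μbar kS kI s * (haldane μbar kS kI s - D) := by
  have hD : 0 < D := hra ▸ haldane_pos hμbar hkS hkI hsa
  have hroot {r : ℝ} (hr : 0 < r) (hroot : haldane μbar kS kI r = D) :
      0 ≤ haldaneDeriv μbar kS kI s * (D * (r - s))
        + haldane μbar kS kI s * (haldane μbar kS kI s - D) := by
    rw [haldaneDeriv_mul_add_eq hkS hkI hr hs.le hroot]
    positivity
  rcases lt_trichotomy (haldaneDeriv μbar kS kI s) 0 with hneg | hzero | hpos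
  · nlinarith [hroot hsb hrb, mul_lt_mul_of_neg_left hσb hneg]
  · rw [hzero, zero_mul, zero_add, eq_sqrt_of_haldaneDeriv_eq_zero hμbar hkS hkI hs.le hzero]
    exact mul_pos (haldane_pos hμbar hkS hkI (Real.sqrt_pos.2 (by positivity))) (sub_pos.2 hpeak)
  · nlinarith [hroot hsa hra, mul_lt_mul_of_pos_left hσa hpos]

end Haldane

section Chemostat

variable {μbar kS kI k α D sin : ℝ}

lemma div_mul_lt_of_lt (hk : 0 < k) (hα : 0 < α) {y r : ℝ} (h : y < α * D / k * (sin - r)) :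
    k / α * y < D * (sin - r) :=
  calc k / α * y < k / α * (α * D / k * (sin - r)) := by gcongr
    _ = D * (sin - r) := by field_simp

lemma lt_div_mul_of_lt (hk : 0 < k) (hα : 0 < α) {y r : ℝ} (h : α * D / k * (sin - r) < y) :
    D * (sin - r) < k / α * y :=
  calc D * (sin - r) = k / α * (α * D / k * (sin - r)) := by field_simp
    _ < k / α * y := by gcongr

theorem min_le_of_hasDerivAt_dilution (hD : 0 ≤ D) {s c : ℝ → ℝ}
    (hs : ∀ t ≥ 0, HasDerivAt s (D * (sin - s t) - c t) t) {r : ℝ}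
    (hc : ∀ t ≥ 0, c t < D * (sin - r)) {t : ℝ} (ht : 0 ≤ t) : min (s 0) r ≤ s t := by
  refine ge_of_hasDerivAt_pos_of_eq (f' := fun τ => D * (sin - s τ) - c τ)
    (fun τ hτ => (hs τ hτ.1).continuousAt.continuousWithinAt)
    (min_le_left _ _) (fun τ hτ heq => ⟨hs τ hτ.1, ?_⟩) t ⟨ht, le_rfl⟩
  have hsr : s τ ≤ r := heq ▸ min_le_right _ _
  nlinarith [hc τ hτ.1, mul_nonneg hD (sub_nonneg.2 hsr)]

theorem le_max_of_hasDerivAt_dilution (hD : 0 ≤ D) {s c : ℝ → ℝ}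
    (hs : ∀ t ≥ 0, HasDerivAt s (D * (sin - s t) - c t) t) (hc : ∀ t ≥ 0, 0 < c t) {t : ℝ}
    (ht : 0 ≤ t) : s t ≤ max (s 0) sin := by
  refine neg_le_neg_iff.1 <| ge_of_hasDerivAt_pos_of_eq (f := fun τ => -s τ)
    (fun τ hτ => (hs τ hτ.1).neg.continuousAt.continuousWithinAt) (neg_le_neg (le_max_left _ _))
    (fun τ hτ heq => ⟨(hs τ hτ.1).neg, ?_⟩) t ⟨ht, le_rfl⟩
  have hsr : sin ≤ s τ := le_max_right (s 0) sin |>.trans (neg_inj.1 heq).ge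
  nlinarith [hc τ hτ.1, mul_nonneg hD (sub_nonneg.2 hsr)]

theorem substrate_mem_Icc (hk : 0 < k) (hα : 0 < α) (hD : 0 ≤ D) {μ s x : ℝ → ℝ} {r : ℝ}
    (hs : ∀ t ≥ 0, HasDerivAt s (D * (sin - s t) - k * μ (s t) * x t) t)
    (hy : ∀ t ≥ 0, 0 < α * μ (s t) * x t ∧ α * μ (s t) * x t < α * D / k * (sin - r))
    {t : ℝ} (ht : 0 ≤ t) : s t ∈ Icc (min (s 0) r) (max (s 0) sin) := by
  have hcons (τ : ℝ) : k * μ (s τ) * x τ = k / α * (α * μ (s τ) * x τ) := by field_simp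
  exact ⟨min_le_of_hasDerivAt_dilution hD hs (fun τ hτ =>
      (hcons τ).trans_lt (div_mul_lt_of_lt hk hα (hy τ hτ).2)) ht,
    le_max_of_hasDerivAt_dilution hD hs (fun τ hτ =>
      (hcons τ).symm ▸ mul_pos (div_pos hk hα) (hy τ hτ).1) ht⟩

/-- The rate `ẏ` of the output `y = α μ(s) x` under dilution `D`, in the coordinates `(s, y)`,
i.e. with `x = y / (α μ(s))`. -/
noncomputable def outputRate (μbar kS kI k α D sin s y : ℝ) : ℝ :=
  y / haldane μbar kS kI s * (haldaneDeriv μbar kS kI s * (D * (sin - s) - k / α * y)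
    + haldane μbar kS kI s * (haldane μbar kS kI s - D))

lemma hasDerivAt_output (hμbar : 0 < μbar) (hkS : 0 < kS) (hkI : 0 < kI) (hα : α ≠ 0)
    {s x : ℝ → ℝ} {t : ℝ} (hst : 0 < s t)
    (hs : HasDerivAt s (D * (sin - s t) - k * haldane μbar kS kI (s t) * x t) t)
    (hx : HasDerivAt x ((haldane μbar kS kI (s t) - D) * x t) t) :
    HasDerivAt (fun τ => α * haldane μbar kS kI (s τ) * x τ)
      (outputRate μbar kS kI k α D sin (s t) (α * haldane μbar kS kI (s t) * x t)) t := by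
  have hμ := (haldane_pos hμbar hkS hkI hst).ne'
  refine ((((hasDerivAt_haldane hkS hkI hst.le).comp t hs).const_mul α).mul hx).congr_deriv ?_
  simp only [outputRate, Function.comp_apply]
  field_simp

lemma outputRate_pos (hμbar : 0 < μbar) (hkS : 0 < kS) (hkI : 0 < kI) (hk : 0 < k) (hα : 0 < α)
    {sa sb s y : ℝ} (hsa : 0 < sa) (hsb : 0 < sb) (hra : haldane μbar kS kI sa = D)
    (hrb : haldane μbar kS kI sb = D) (hpeak : D < haldane μbar kS kI (Real.sqrt (kS * kI)))
    (hs : 0 < s) (hy : 0 < y) (hlo : α * D / k * (sin - sb) < y)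
    (hhi : y < α * D / k * (sin - sa)) :
    0 < outputRate μbar kS kI k α D sin s y := by
  refine mul_pos (div_pos hy (haldane_pos hμbar hkS hkI hs))
    (haldaneDeriv_mul_add_pos hμbar hkS hkI hsa hsb hra hrb hpeak hs ?_ ?_)
  · linarith [div_mul_lt_of_lt hk hα hhi]
  · linarith [lt_div_mul_of_lt hk hα hlo]

lemma continuousOn_outputRate (hμbar : 0 < μbar) (hkS : 0 < kS) (hkI : 0 < kI) :
    ContinuousOn (fun p : ℝ × ℝ => outputRate μbar kS kI k α D sin p.1 p.2) (Ioi 0 ×ˢ univ) := by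
  have hfst : MapsTo Prod.fst (Ioi (0 : ℝ) ×ˢ (univ : Set ℝ)) (Ici 0) := fun _ hp =>
    mem_Ici.2 (mem_Ioi.1 hp.1).le
  have hμ := (continuousOn_haldane (μbar := μbar) hkS hkI).comp continuousOn_fst hfst
  have hμ' := (continuousOn_haldaneDeriv (μbar := μbar) hkS hkI).comp continuousOn_fst hfst
  have hne : ∀ p ∈ Ioi (0 : ℝ) ×ˢ (univ : Set ℝ), haldane μbar kS kI p.1 ≠ 0 :=
    fun p hp => (haldane_pos hμbar hkS hkI hp.1).ne'
  unfold outputRate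
  exact (continuousOn_snd.div hμ hne).mul
    ((hμ'.mul (by fun_prop)).add (hμ.mul (hμ.sub continuousOn_const)))

lemma exists_pos_le_outputRate (hμbar : 0 < μbar) (hkS : 0 < kS) (hkI : 0 < kI) (hk : 0 < k)
    (hα : 0 < α) {sa sb : ℝ} (hsa : 0 < sa) (hsb : 0 < sb) (hra : haldane μbar kS kI sa = D)
    (hrb : haldane μbar kS kI sb = D) (hpeak : D < haldane μbar kS kI (Real.sqrt (kS * kI)))
    {m M y₀ y₁ : ℝ} (hm : 0 < m) (hy₀ : 0 < y₀) (hlo : α * D / k * (sin - sb) < y₀)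
    (hhi : y₁ < α * D / k * (sin - sa)) :
    ∃ ε > 0, ∀ p ∈ Icc m M ×ˢ Icc y₀ y₁, ε ≤ outputRate μbar kS kI k α D sin p.1 p.2 :=
  (isCompact_Icc.prod isCompact_Icc).exists_forall_le'
    ((continuousOn_outputRate hμbar hkS hkI).mono fun _ hp => ⟨hm.trans_le hp.1.1, trivial⟩)
    fun _ hp => outputRate_pos hμbar hkS hkI hk hα hsa hsb hra hrb hpeak (hm.trans_le hp.1.1)
      (hy₀.trans_le hp.2.1) (hlo.trans_le hp.2.1) (hp.2.2.trans_lt hhi)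

end Chemostat

theorem exit_region_general (μbar kS kI k sin α Di yan ylo yhi sai sbi : ℝ)
    (hμbar : 0 < μbar) (hkS : 0 < kS) (hkI : 0 < kI) (hk : 0 < k) (hα : 0 < α)
    (μ : ℝ → ℝ)
    (hμ : ∀ s : ℝ, μ s = μbar * s / (kS + s + s ^ 2 / kI))
    -- s_a(D_i) < s̄ < s_b(D_i): the roots of μ(s) = D_i
    (hDi2 : Di < μ (Real.sqrt (kS * kI)))
    (hsa1 : 0 < sai) (hra : μ sai = Di)
    (hsb1 : Real.sqrt (kS * kI) < sbi) (hrb : μ sbi = Di)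
    -- region bounds and conditions y_b(D_i) < ȳ_i, y_a(D_i) > ō_i
    (hcond1 : α * Di / k * (sin - sbi) < ylo)
    (hcond2 : α * Di / k * (sin - sai) > yhi)
    -- the solution: positive, continuous, satisfying the dynamics with u = D_i
    -- whenever it lies in the region Y_i
    (s x : ℝ → ℝ) (hscont : Continuous s) (hxcont : Continuous x)
    (hspos : ∀ t : ℝ, 0 ≤ t → 0 < s t) (hxpos : ∀ t : ℝ, 0 ≤ t → 0 < x t)
    (hs : ∀ t : ℝ, 0 ≤ t → ylo ≤ α * μ (s t) * x t → α * μ (s t) * x t ≤ yhi →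
      HasDerivAt s (Di * (sin - s t) - k * μ (s t) * x t) t)
    (hx : ∀ t : ℝ, 0 ≤ t → ylo ≤ α * μ (s t) * x t → α * μ (s t) * x t ≤ yhi →
      HasDerivAt x ((μ (s t) - Di) * x t) t)
    -- initial condition in Y_i
    (hinit1 : ylo ≤ α * μ (s 0) * x 0) (hinit2 : α * μ (s 0) * x 0 ≤ yhi) :
    -- V = y_a(D_n) − y strictly decreases while the solution stays in Y_i
    (∀ t1 t2 : ℝ, 0 ≤ t1 → t1 < t2 →
      (∀ τ ∈ Set.Icc t1 t2, ylo ≤ α * μ (s τ) * x τ ∧ α * μ (s τ) * x τ ≤ yhi) →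
      yan - α * μ (s t2) * x t2 < yan - α * μ (s t1) * x t1) ∧
    -- the solution leaves Y_i in finite time through y = ō_i
    (∃ T : ℝ, 0 ≤ T ∧ α * μ (s T) * x T = yhi ∧
      ∀ t ∈ Set.Ico (0 : ℝ) T,
        ylo ≤ α * μ (s t) * x t ∧ α * μ (s t) * x t < yhi) := by
  obtain rfl : μ = haldane μbar kS kI := funext hμ
  have hD : 0 < Di := hra ▸ haldane_pos hμbar hkS hkI hsa1
  have hsb : 0 < sbi := (Real.sqrt_nonneg _).trans_lt hsb1
  set Y := fun t => α * haldane μbar kS kI (s t) * x t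
  have hYpos : ∀ t ≥ 0, 0 < Y t := fun t ht =>
    mul_pos (mul_pos hα (haldane_pos hμbar hkS hkI (hspos t ht))) (hxpos t ht)
  have hYcont : ContinuousOn Y (Ici 0) :=
    (continuousOn_const.mul ((continuousOn_haldane hkS hkI).comp hscont.continuousOn
      fun t ht => (hspos t ht).le)).mul hxcont.continuousOn
  have hderiv : ∀ t ≥ 0, Y t ∈ Icc ylo yhi →
      HasDerivAt Y (outputRate μbar kS kI k α Di sin (s t) (Y t)) t := fun t ht hreg =>
    hasDerivAt_output hμbar hkS hkI hα.ne' (hspos t ht) (hs t ht hreg.1 hreg.2)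
      (hx t ht hreg.1 hreg.2)
  have hpos : ∀ t ≥ 0, Y t ∈ Icc ylo yhi → 0 < outputRate μbar kS kI k α Di sin (s t) (Y t) :=
    fun t ht hreg => outputRate_pos hμbar hkS hkI hk hα hsa1 hsb hra hrb hDi2 (hspos t ht)
      (hYpos t ht) (hcond1.trans_le hreg.1) (hreg.2.trans_lt hcond2)
  refine ⟨fun t1 t2 h0 h12 hreg => sub_lt_sub_left (strictMonoOn_of_mapsTo_Icc hderiv hpos h0
    hreg ⟨le_rfl, h12.le⟩ ⟨h12.le, le_rfl⟩ h12) yan,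
    exists_exit hYcont ⟨hinit1, hinit2⟩ hderiv hpos fun htrap => ?_⟩
  obtain ⟨ε, hε, hεle⟩ := exists_pos_le_outputRate hμbar hkS hkI hk hα hsa1 hsb hra hrb hDi2
    (lt_min (hspos 0 le_rfl) hsa1) (hYpos 0 le_rfl) (hcond1.trans_le hinit1) hcond2
  have hsubstrate : ∀ t ≥ 0, s t ∈ Icc (min (s 0) sai) (max (s 0) sin) := fun t ht =>
    substrate_mem_Icc hk hα hD.le
      (fun τ hτ => hs τ hτ (hinit1.trans (htrap τ hτ).1) (htrap τ hτ).2)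
      (fun τ hτ => ⟨hYpos τ hτ, (htrap τ hτ).2.trans_lt hcond2⟩) ht
  exact ⟨ε, hε, fun t ht => hεle (s t, Y t) ⟨hsubstrate t ht, htrap t ht⟩⟩

/-- Under the quantized feedback u = D_i on Y_i, if y_b(D_i) < ȳ_i and
y_a(D_i) > ō_i, then V = y_a(D_n) − y is strictly decreasing along any solution
while it stays in Y_i, and every solution starting in Y_i exits in finite time
through the boundary y = ō_i. -/
theorem exit_region (μbar kS kI k sin α Di yan ylo yhi sai sbi : ℝ)
    (hμbar : 0 < μbar) (hkS : 0 < kS) (hkI : 0 < kI) (hk : 0 < k) (hα : 0 < α)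
    (hsbar : Real.sqrt (kS * kI) < sin)
    (μ : ℝ → ℝ)
    (hμ : ∀ s : ℝ, μ s = μbar * s / (kS + s + s ^ 2 / kI))
    -- s_a(D_i) < s̄ < s_b(D_i): the roots of μ(s) = D_i
    (hDi1 : μ sin < Di) (hDi2 : Di < μ (Real.sqrt (kS * kI)))
    (hsa1 : 0 < sai) (hsa2 : sai < Real.sqrt (kS * kI)) (hra : μ sai = Di)
    (hsb1 : Real.sqrt (kS * kI) < sbi) (hrb : μ sbi = Di)
    -- region bounds and conditions y_b(D_i) < ȳ_i, y_a(D_i) > ō_i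
    (hylo : 0 ≤ ylo) (hlohi : ylo < yhi)
    (hcond1 : α * Di / k * (sin - sbi) < ylo)
    (hcond2 : α * Di / k * (sin - sai) > yhi)
    -- the solution: positive, continuous, satisfying the dynamics with u = D_i
    -- whenever it lies in the region Y_i
    (s x : ℝ → ℝ) (hscont : Continuous s) (hxcont : Continuous x)
    (hspos : ∀ t : ℝ, 0 ≤ t → 0 < s t) (hxpos : ∀ t : ℝ, 0 ≤ t → 0 < x t)
    (hs : ∀ t : ℝ, 0 ≤ t → ylo ≤ α * μ (s t) * x t → α * μ (s t) * x t ≤ yhi →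
      HasDerivAt s (Di * (sin - s t) - k * μ (s t) * x t) t)
    (hx : ∀ t : ℝ, 0 ≤ t → ylo ≤ α * μ (s t) * x t → α * μ (s t) * x t ≤ yhi →
      HasDerivAt x ((μ (s t) - Di) * x t) t)
    -- initial condition in Y_i
    (hinit1 : ylo ≤ α * μ (s 0) * x 0) (hinit2 : α * μ (s 0) * x 0 ≤ yhi) :
    -- V = y_a(D_n) − y strictly decreases while the solution stays in Y_i
    (∀ t1 t2 : ℝ, 0 ≤ t1 → t1 < t2 →
      (∀ τ ∈ Set.Icc t1 t2, ylo ≤ α * μ (s τ) * x τ ∧ α * μ (s τ) * x τ ≤ yhi) →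
      yan - α * μ (s t2) * x t2 < yan - α * μ (s t1) * x t1) ∧
    -- the solution leaves Y_i in finite time through y = ō_i
    (∃ T : ℝ, 0 ≤ T ∧ α * μ (s T) * x T = yhi ∧
      ∀ t ∈ Set.Ico (0 : ℝ) T,
        ylo ≤ α * μ (s t) * x t ∧ α * μ (s t) * x t < yhi) :=
  exit_region_general μbar kS kI k sin α Di yan ylo yhi sai sbi hμbar hkS hkI hk hα μ hμ hDi2 hsa1
    hra hsb1 hrb hcond1 hcond2 s x hscont hxcont hspos hxpos hs hx hinit1 hinit2
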